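/- Let φ and ψ be integrable functions on (a,b) with φ decreasing and 0 ≤ ψ ≤ 1, and let γ = ∫_a^b ψ(t) dt. Then ∫_a^b φ(t)ψ(t) dt ≥ ∫_{b-γ}^b φ(t) dt (the lower Steffensen inequality alone). -/

import Mathlib

/-!
With `c = b - γ`, monotonicity of `φ` gives `∫_a^c φψ ≥ φ(c) ∫_a^c ψ` and
`∫_c^b φ(1-ψ) ≤ φ(c) ∫_c^b (1-ψ)`. The choice of `c` makes the two weights balance,
`∫_c^b (1-ψ) = ∫_a^c ψ`, so `∫_c^b φ - ∫_c^b φψ ≤ ∫_a^c φψ`.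
-/

open MeasureTheory intervalIntegral Set

namespace intervalIntegral

variable {a b m : ℝ} {f w : ℝ → ℝ}

theorem const_mul_integral_le_integral_mul (hab : a ≤ b) (hw : IntervalIntegrable w volume a b)
    (hfw : IntervalIntegrable (fun t => f t * w t) volume a b)
    (hf : ∀ t ∈ Ioo a b, m ≤ f t) (hw0 : ∀ t ∈ Ioo a b, 0 ≤ w t) :
    m * ∫ t in a..b, w t ≤ ∫ t in a..b, f t * w t := by
  rw [← integral_const_mul]
  exact integral_mono_on_of_le_Ioo hab (hw.const_mul m) hfw fun t ht =>
    mul_le_mul_of_nonneg_right (hf t ht) (hw0 t ht)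

theorem integral_mul_le_const_mul_integral (hab : a ≤ b) (hw : IntervalIntegrable w volume a b)
    (hfw : IntervalIntegrable (fun t => f t * w t) volume a b)
    (hf : ∀ t ∈ Ioo a b, f t ≤ m) (hw0 : ∀ t ∈ Ioo a b, 0 ≤ w t) :
    ∫ t in a..b, f t * w t ≤ m * ∫ t in a..b, w t := by
  rw [← integral_const_mul]
  exact integral_mono_on_of_le_Ioo hab hfw (hw.const_mul m) fun t ht =>
    mul_le_mul_of_nonneg_right (hf t ht) (hw0 t ht)

theorem integral_one_sub_eq_integral_of_sub_eq {c : ℝ} (hac : IntervalIntegrable w volume a c)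
    (hcb : IntervalIntegrable w volume c b) (hc : b - c = ∫ t in a..b, w t) :
    ∫ t in c..b, (1 - w t) = ∫ t in a..c, w t := by
  rw [integral_sub intervalIntegrable_const hcb, integral_const, smul_eq_mul, mul_one, hc,
    ← integral_add_adjacent_intervals hac hcb, add_sub_cancel_right]

end intervalIntegral

theorem integral_le_integral_mul_of_antitoneOn {a b c : ℝ} {φ ψ : ℝ → ℝ} (hc : c ∈ Icc a b)
    (hψ : IntervalIntegrable ψ volume a b)
    (hφψ : IntervalIntegrable (fun t => φ t * ψ t) volume a b)
    (hmono : AntitoneOn φ (Icc a b)) (hψ01 : ∀ t ∈ Ioo a b, ψ t ∈ Icc (0 : ℝ) 1)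
    (hbc : b - c = ∫ t in a..b, ψ t) :
    ∫ t in c..b, φ t ≤ ∫ t in a..b, φ t * ψ t := by
  have hsub_ac : uIcc a c ⊆ uIcc a b := uIcc_subset_uIcc_left (Icc_subset_uIcc hc)
  have hsub_cb : uIcc c b ⊆ uIcc a b := uIcc_subset_uIcc_right (Icc_subset_uIcc hc)
  have hφ_cb : IntervalIntegrable φ volume c b :=
    (hmono.mono (uIcc_of_le (hc.1.trans hc.2) ▸ hsub_cb)).intervalIntegrable
  have hφψ_cb := hφψ.mono_set hsub_cb
  have hφ_sub : IntervalIntegrable (fun t => φ t * (1 - ψ t)) volume c b := by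
    simpa only [mul_one_sub] using hφ_cb.sub hφψ_cb
  have left : φ c * ∫ t in a..c, ψ t ≤ ∫ t in a..c, φ t * ψ t :=
    const_mul_integral_le_integral_mul hc.1 (hψ.mono_set hsub_ac) (hφψ.mono_set hsub_ac)
      (fun t ht => hmono ⟨ht.1.le, ht.2.le.trans hc.2⟩ hc ht.2.le)
      (fun t ht => (hψ01 t ⟨ht.1, ht.2.trans_le hc.2⟩).1)
  have right : ∫ t in c..b, φ t * (1 - ψ t) ≤ φ c * ∫ t in c..b, (1 - ψ t) :=
    integral_mul_le_const_mul_integral hc.2 (intervalIntegrable_const.sub (hψ.mono_set hsub_cb))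
      hφ_sub (fun t ht => hmono hc ⟨hc.1.trans ht.1.le, ht.2.le⟩ ht.1.le)
      (fun t ht => sub_nonneg.2 (hψ01 t ⟨hc.1.trans_lt ht.1, ht.2⟩).2)
  rw [integral_one_sub_eq_integral_of_sub_eq (hψ.mono_set hsub_ac) (hψ.mono_set hsub_cb) hbc]
    at right
  calc ∫ t in c..b, φ t
      = (∫ t in c..b, φ t * (1 - ψ t)) + ∫ t in c..b, φ t * ψ t := by
        rw [← integral_add hφ_sub hφψ_cb]; simp only [mul_one_sub, sub_add_cancel]
    _ ≤ (∫ t in a..c, φ t * ψ t) + ∫ t in c..b, φ t * ψ t := by linarith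
    _ = ∫ t in a..b, φ t * ψ t :=
        integral_add_adjacent_intervals (hφψ.mono_set hsub_ac) hφψ_cb

theorem steffensen_lower_general (a b : ℝ) (hab : a ≤ b) (φ ψ : ℝ → ℝ)
    (hψ : IntervalIntegrable ψ volume a b)
    (hφψ : IntervalIntegrable (fun t => φ t * ψ t) volume a b)
    (hmono : AntitoneOn φ (Icc a b))
    (hψ01 : ∀ t ∈ Ioo a b, ψ t ∈ Icc (0 : ℝ) 1)
    (γ : ℝ) (hγ : γ = ∫ t in a..b, ψ t) :
    (∫ t in a..b, φ t * ψ t) ≥ ∫ t in (b - γ)..b, φ t := by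
  have hγ0 : 0 ≤ γ := by
    simpa [hγ] using integral_mono_on_of_le_Ioo hab intervalIntegrable_const hψ
      fun t ht => (hψ01 t ht).1
  have hγle : γ ≤ b - a := by
    simpa [hγ] using integral_mono_on_of_le_Ioo hab hψ intervalIntegrable_const
      fun t ht => (hψ01 t ht).2
  exact integral_le_integral_mul_of_antitoneOn ⟨by linarith, by linarith⟩ hψ hφψ hmono hψ01
    (by rw [← hγ]; ring)

/-- Steffensen's inequality: if `φ` is decreasing and `0 ≤ ψ ≤ 1` are integrable on `(a,b)`,
and `γ = ∫_a^b ψ`, then `∫_{b-γ}^b φ ≤ ∫_a^b φψ ≤ ∫_a^{a+γ} φ`. -/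
theorem steffensen_lower (a b : ℝ) (hab : a ≤ b) (φ ψ : ℝ → ℝ)
    (hφ : IntervalIntegrable φ volume a b)
    (hψ : IntervalIntegrable ψ volume a b)
    (hφψ : IntervalIntegrable (fun t => φ t * ψ t) volume a b)
    (hmono : AntitoneOn φ (Icc a b))
    (hψ01 : ∀ t ∈ Ioo a b, ψ t ∈ Icc (0 : ℝ) 1)
    (γ : ℝ) (hγ : γ = ∫ t in a..b, ψ t) :
    (∫ t in a..b, φ t * ψ t) ≥ ∫ t in (b - γ)..b, φ t :=
  steffensen_lower_general a b hab φ ψ hψ hφψ hmono hψ01 γ hγ
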